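/- The set of 3×3 matrices with natural-number entries all of whose row sums and column sums equal 3, considered up to permutation-conjugacy, has exactly 16 equivalence classes. (Equivalently, there are exactly 16 isomorphism classes of directed multigraphs on 3 vertices in which every vertex has 3 outgoing and 3 incoming edges.) -/

import Mathlib

/-!
Conjugating by the permutation matrix of `σ` just relabels the vertices:
`PermConj A B ↔ A = B.submatrix σ σ`. A `3 × 3` matrix with all line sums `3` is determined
by its top-left `2 × 2` block, whose entries are at most `3`. So it suffices to exhibit
`16` pairwise non-conjugate such matrices and to check, over the `4⁴` candidate blocks and
the `6` permutations of `Fin 3`, that every regular matrix is conjugate to one of them.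
-/

/-- The permutation matrix of a permutation `σ` (entries in `ℕ`). -/
def permMat {n : Type*} [DecidableEq n] (σ : Equiv.Perm n) : Matrix n n ℕ :=
  fun i j => if σ j = i then 1 else 0

/-- Two square ℕ-valued matrices are permutation-conjugate if `T * A * T⁻¹ = B`
for some permutation matrix `T`, equivalently `T * A = B * T`. -/
def PermConj {n : Type*} [Fintype n] [DecidableEq n] (A B : Matrix n n ℕ) : Prop :=
  ∃ σ : Equiv.Perm n, permMat σ * A = B * permMat σ

/-- `n × n` ℕ-matrices all of whose row sums and column sums equal `d`
(adjacency matrices of `d`-regular directed multigraphs on `n` vertices). -/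
def RegMat (n d : ℕ) : Type :=
  {A : Matrix (Fin n) (Fin n) ℕ // ∀ i, (∑ j, A i j = d) ∧ (∑ j, A j i = d)}

open Matrix

section PermConj

variable {n : Type*} [Fintype n] [DecidableEq n]

theorem permMat_mul_eq_submatrix (σ : Equiv.Perm n) (A : Matrix n n ℕ) :
    permMat σ * A = A.submatrix σ.symm id := by
  ext i j
  simp [permMat, mul_apply, ← Equiv.eq_symm_apply]

theorem mul_permMat_eq_submatrix (σ : Equiv.Perm n) (A : Matrix n n ℕ) :
    A * permMat σ = A.submatrix id σ := by
  ext i j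
  simp [permMat, mul_apply]

theorem permConj_iff_exists_eq_submatrix {A B : Matrix n n ℕ} :
    PermConj A B ↔ ∃ σ : Equiv.Perm n, A = B.submatrix σ σ := by
  simp only [PermConj, permMat_mul_eq_submatrix, mul_permMat_eq_submatrix]
  refine exists_congr fun σ => ⟨fun h => ?_, fun h => ?_⟩
  · ext i j
    simpa using congrFun₂ h (σ i) j
  · ext i j
    simp [h]

theorem permConj_equivalence : Equivalence (PermConj (n := n)) := by
  refine ⟨fun A => ?_, fun {A B} => ?_, fun {A B C} => ?_⟩ <;>
    simp only [permConj_iff_exists_eq_submatrix]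
  · exact ⟨1, by simp⟩
  · rintro ⟨σ, rfl⟩
    exact ⟨σ⁻¹, by simp⟩
  · rintro ⟨σ, rfl⟩ ⟨τ, rfl⟩
    exact ⟨τ * σ, by simp⟩

instance : DecidableRel (PermConj (n := n)) := fun _ _ =>
  decidable_of_iff' _ permConj_iff_exists_eq_submatrix

end PermConj

theorem Nat.card_quot_eq_of_transversal {α ι : Type*} {r : α → α → Prop} (hr : Equivalence r)
    (f : ι → α) (hf : ∀ i j, r (f i) (f j) → i = j) (hcover : ∀ a, ∃ i, r (f i) a) :
    Nat.card (Quot r) = Nat.card ι := by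
  have hbij : Function.Bijective (Quot.mk r ∘ f) := by
    refine ⟨fun i j hij => hf i j (hr.eqvGen_iff.mp (Quot.eq.mp hij)), fun q => ?_⟩
    induction q using Quot.ind with
    | mk a =>
      obtain ⟨i, hi⟩ := hcover a
      exact ⟨i, Quot.sound hi⟩
  exact (Nat.card_eq_of_bijective _ hbij).symm

def regRep : Fin 16 → Matrix (Fin 3) (Fin 3) ℕ :=
  ![!![0,0,3;0,3,0;3,0,0], !![0,0,3;1,2,0;2,1,0], !![0,0,3;2,1,0;1,2,0],
    !![0,0,3;3,0,0;0,3,0], !![0,1,2;1,1,1;2,1,0], !![0,1,2;1,2,0;2,0,1],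
    !![0,1,2;2,0,1;1,2,0], !![0,1,2;2,1,0;1,1,1], !![1,0,2;0,3,0;2,0,1],
    !![1,0,2;1,2,0;1,1,1], !![1,0,2;2,1,0;0,2,1], !![1,1,1;1,1,1;1,1,1],
    !![1,1,1;1,2,0;1,0,2], !![2,0,1;0,3,0;1,0,2], !![2,0,1;1,2,0;0,1,2],
    !![3,0,0;0,3,0;0,0,3]]

theorem regRep_regular : ∀ k i, (∑ j, regRep k i j = 3) ∧ (∑ j, regRep k j i = 3) := by
  decide

theorem regRep_eq_of_permConj : ∀ i j, PermConj (regRep i) (regRep j) → i = j := by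
  decide +kernel

-- With truncated subtraction this is the regular matrix with top-left block `!![a, b; d, e]`
-- only when such a matrix exists, whence the regularity hypothesis below.
def regCompletion (a b d e : ℕ) : Matrix (Fin 3) (Fin 3) ℕ :=
  !![a, b, 3 - a - b; d, e, 3 - d - e; 3 - a - d, 3 - b - e, a + b + d + e - 3]

set_option synthInstance.maxSize 1000 in
theorem exists_regRep_permConj_regCompletion :
    ∀ a < 4, ∀ b < 4, ∀ d < 4, ∀ e < 4,
      (∀ i, (∑ j, regCompletion a b d e i j = 3) ∧ (∑ j, regCompletion a b d e j i = 3)) →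
        ∃ k, PermConj (regRep k) (regCompletion a b d e) := by
  decide +kernel

theorem exists_regRep_permConj (A : RegMat 3 3) : ∃ k, PermConj (regRep k) A.1 := by
  obtain ⟨M, hM⟩ := A
  obtain ⟨r0, c0⟩ := hM 0
  obtain ⟨r1, c1⟩ := hM 1
  obtain ⟨r2, c2⟩ := hM 2
  simp only [Fin.sum_univ_three] at r0 r1 r2 c0 c1 c2
  have hM_eq : M = regCompletion (M 0 0) (M 0 1) (M 1 0) (M 1 1) := by
    ext i j
    fin_cases i <;> fin_cases j <;> simp [regCompletion] <;> omega
  change ∃ k, PermConj (regRep k) M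
  rw [hM_eq] at hM ⊢
  exact exists_regRep_permConj_regCompletion _ (by omega) _ (by omega) _ (by omega) _ (by omega) hM

/-- there are exactly 16 permutation-conjugacy classes of 3×3
ℕ-matrices with all row and column sums equal to 3. -/
theorem card_classes_reg_3_3 :
    Nat.card (Quot (fun A B : RegMat 3 3 => PermConj A.1 B.1)) = 16 :=
  (Nat.card_quot_eq_of_transversal (permConj_equivalence.comap Subtype.val)
    (fun k => ⟨regRep k, regRep_regular k⟩) regRep_eq_of_permConj exists_regRep_permConj).trans
    (Nat.card_fin 16)
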